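/- If for every producer p the point (v_p*, η_p*, μ_p*) satisfies the individual KKT system −E[π_p] − λ_p Q_p v_p* − B_p^⊤ η_p* − A_p^⊤ μ_p* = 0, η_p*^⊤(B_p v_p* − b_p) = 0, B_p v_p* ≤ b_p, A_p v_p* = a_p, η_p* ≥ 0 (and similarly for each consumer c), and the market clearing Σ_c V_c* + Σ_p V_p* = 0 holds, then the concatenated point x* = (v*, E[Π]*) with stacked multipliers η* = (η_k*)_k, μ* = ((μ_k*)_k, μ_M* = 0) satisfies the aggregated KKT system −π − Q x* − B^⊤ η* − A^⊤ μ* = 0, η*^⊤(B x* − b) = 0, B x* ≤ b, A x* = a, η* ≥ 0, μ_M* = 0, where A, B, Q, π, a, b are the block matrices/vectors formed as in the paper (with Q containing the coupling blocks M_p and I to E[Π], and A containing the market clearing row). Conversely, any solution of the aggregated system yields solutions of the individual systems plus market clearing. -/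

import Mathlib

open Matrix BigOperators

/-- Concatenated equality-constraint matrix `A` of Section 4:
block diagonal in the `A k` with an extra bottom block row
`[M_{p_1}, …, M_{p_P}, I, …, I, 0]` (market clearing row). -/
def bigA {m N : ℕ} {n q : Fin m → ℕ}
    (A : ∀ k, Matrix (Fin (q k)) (Fin (n k)) ℝ)
    (M : ∀ k, Matrix (Fin N) (Fin (n k)) ℝ) :
    Matrix ((Σ k : Fin m, Fin (q k)) ⊕ Fin N)
      ((Σ k : Fin m, Fin (n k)) ⊕ Fin N) ℝ :=
  Matrix.of fun rw cl =>
    match rw, cl with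
    | Sum.inl ⟨k, r⟩, Sum.inl ⟨k', j⟩ => if h : k' = k then A k r (h ▸ j) else 0
    | Sum.inl _, Sum.inr _ => 0
    | Sum.inr rN, Sum.inl ⟨k, j⟩ => (M k) rN j
    | Sum.inr _, Sum.inr _ => 0

/-- Concatenated inequality-constraint matrix `B`: block diagonal in the `B k`,
with zero columns corresponding to the price variable. -/
def bigB {m N : ℕ} {n s : Fin m → ℕ}
    (B : ∀ k, Matrix (Fin (s k)) (Fin (n k)) ℝ) :
    Matrix (Σ k : Fin m, Fin (s k))
      ((Σ k : Fin m, Fin (n k)) ⊕ Fin N) ℝ :=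
  Matrix.of fun rw cl =>
    match rw, cl with
    | ⟨k, r⟩, Sum.inl ⟨k', j⟩ => if h : k' = k then B k r (h ▸ j) else 0
    | _, Sum.inr _ => 0

/-- Concatenated quadratic-form matrix `Q` of Section 4: block diagonal in the
`λ_k Q_k`, coupled to the price block through `M_k^⊤` / `M_k`, zero
bottom-right block. -/
def bigQ {m N : ℕ} {n : Fin m → ℕ} (lam : Fin m → ℝ)
    (Qk : ∀ k, Matrix (Fin (n k)) (Fin (n k)) ℝ)
    (M : ∀ k, Matrix (Fin N) (Fin (n k)) ℝ) :
    Matrix ((Σ k : Fin m, Fin (n k)) ⊕ Fin N)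
      ((Σ k : Fin m, Fin (n k)) ⊕ Fin N) ℝ :=
  Matrix.of fun rw cl =>
    match rw, cl with
    | Sum.inl ⟨k, i⟩, Sum.inl ⟨k', j⟩ =>
        if h : k' = k then lam k * Qk k i (h ▸ j) else 0
    | Sum.inl ⟨k, i⟩, Sum.inr r => (M k) r i
    | Sum.inr r, Sum.inl ⟨k, j⟩ => (M k) r j
    | Sum.inr _, Sum.inr _ => 0

/-!
In the block form of Section 4, `A = [[diag A_k, 0], [M_1 ⋯ M_m, 0]]`, `B = [diag B_k | 0]` and
`Q = [[diag λ_k Q_k, [M_1 ⋯ M_m]ᵀ], [M_1 ⋯ M_m, 0]]`, so each block row of the aggregated KKT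
system is the corresponding condition of one player, while the price rows of both the
stationarity and the equality condition read `∑ k, M_k v_k = 0`, i.e. market clearing. The one
condition that does not split row by row is complementarity, but it is a sum over the players of
the terms `η_kᵀ (B_k v_k - b_k)`, which are nonpositive by feasibility and dual feasibility, so it
vanishes iff every term does.
-/

section SigmaBlocks

variable {R ι l : Type*} {α β : ι → Type*}

theorem Sigma.uncurry_injective {γ : ∀ i, β i → Type*} :
    Function.Injective (Sigma.uncurry : (∀ i (b : β i), γ i b) → _) :=
  (Equiv.piCurry γ).symm.injective

theorem Sigma.uncurry_eq_zero_iff [Zero R] {u : ∀ i, β i → R} : Sigma.uncurry u = 0 ↔ u = 0 :=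
  Sigma.uncurry_injective.eq_iff' rfl

theorem Sigma.uncurry_le_uncurry_iff [LE R] {u w : ∀ i, β i → R} :
    Sigma.uncurry u ≤ Sigma.uncurry w ↔ u ≤ w := by
  simp only [Pi.le_def, Sigma.forall, Sigma.uncurry]

theorem Sigma.uncurry_nonneg_iff [LE R] [Zero R] {u : ∀ i, β i → R} :
    0 ≤ Sigma.uncurry u ↔ 0 ≤ u :=
  Sigma.uncurry_le_uncurry_iff (u := 0)

def Matrix.sigmaCols (M : ∀ i, Matrix l (β i) R) : Matrix l (Σ i, β i) R :=
  of fun r p => M p.1 r p.2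

theorem Matrix.sigmaCols_transpose_mulVec [Fintype l] [NonUnitalNonAssocSemiring R]
    (M : ∀ i, Matrix l (β i) R) (w : l → R) :
    (sigmaCols M)ᵀ *ᵥ w = Sigma.uncurry fun i => (M i)ᵀ *ᵥ w :=
  rfl

theorem Matrix.blockDiagonal'_apply_mk [DecidableEq ι] [Zero R] (A : ∀ i, Matrix (α i) (β i) R)
    (i : ι) (r : α i) (i' : ι) (j : β i') :
    blockDiagonal' A ⟨i, r⟩ ⟨i', j⟩ = if h : i' = i then A i r (h ▸ j) else 0 := by
  by_cases h : i' = i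
  · subst h; simp [blockDiagonal'_apply]
  · simp [blockDiagonal'_apply, h, Ne.symm h]

variable [Fintype ι] [∀ i, Fintype (β i)]

theorem Sigma.uncurry_dotProduct_uncurry [NonUnitalNonAssocSemiring R] (u w : ∀ i, β i → R) :
    Sigma.uncurry u ⬝ᵥ Sigma.uncurry w = ∑ i, u i ⬝ᵥ w i :=
  Fintype.sum_sigma _

theorem Sigma.uncurry_dotProduct_eq_zero_iff [Ring R] [PartialOrder R] [IsOrderedRing R]
    {u w : ∀ i, β i → R} (hu : 0 ≤ u) (hw : w ≤ 0) :
    Sigma.uncurry u ⬝ᵥ Sigma.uncurry w = 0 ↔ ∀ i, u i ⬝ᵥ w i = 0 := by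
  have hnonpos : ∀ i, u i ⬝ᵥ w i ≤ 0 := fun i => by
    simpa [dotProduct_neg] using dotProduct_nonneg_of_nonneg (hu i) (neg_nonneg.2 (hw i))
  rw [Sigma.uncurry_dotProduct_uncurry, Fintype.sum_eq_zero_iff_of_nonpos hnonpos, funext_iff]
  rfl

theorem Matrix.blockDiagonal'_mulVec_uncurry [DecidableEq ι] [NonUnitalNonAssocSemiring R]
    (A : ∀ i, Matrix (α i) (β i) R) (v : ∀ i, β i → R) :
    blockDiagonal' A *ᵥ Sigma.uncurry v = Sigma.uncurry fun i => A i *ᵥ v i := by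
  funext ⟨i, r⟩
  simp only [mulVec, dotProduct, blockDiagonal'_apply, Fintype.sum_sigma]
  rw [Fintype.sum_eq_single i fun j hj => by simp [Ne.symm hj]]
  simp [Sigma.uncurry, mulVec, dotProduct]

theorem Matrix.sigmaCols_mulVec_uncurry [NonUnitalNonAssocSemiring R]
    (M : ∀ i, Matrix l (β i) R) (v : ∀ i, β i → R) :
    sigmaCols M *ᵥ Sigma.uncurry v = ∑ i, M i *ᵥ v i := by
  funext r
  simp [mulVec, dotProduct, sigmaCols, Fintype.sum_sigma, Finset.sum_apply, Sigma.uncurry]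

end SigmaBlocks

section Aggregation

variable {m N : ℕ} {n q s : Fin m → ℕ}
  (A : ∀ k, Matrix (Fin (q k)) (Fin (n k)) ℝ) (B : ∀ k, Matrix (Fin (s k)) (Fin (n k)) ℝ)
  (M : ∀ k, Matrix (Fin N) (Fin (n k)) ℝ) (lam : Fin m → ℝ)
  (Qk : ∀ k, Matrix (Fin (n k)) (Fin (n k)) ℝ) (v : ∀ k, Fin (n k) → ℝ) (Pe : Fin N → ℝ)

theorem bigA_eq_fromBlocks : bigA A M = fromBlocks (blockDiagonal' A) 0 (sigmaCols M) 0 := by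
  ext (⟨k, r⟩ | r) (⟨k', j⟩ | j) <;> simp [bigA, sigmaCols, blockDiagonal'_apply_mk]

theorem bigB_eq_fromCols : bigB B (N := N) = fromCols (blockDiagonal' B) 0 := by
  ext ⟨k, r⟩ (⟨k', j⟩ | j) <;> simp [bigB, blockDiagonal'_apply_mk]

theorem bigQ_eq_fromBlocks :
    bigQ lam Qk M =
      fromBlocks (blockDiagonal' fun k => lam k • Qk k) (sigmaCols M)ᵀ (sigmaCols M) 0 := by
  ext (⟨k, r⟩ | r) (⟨k', j⟩ | j) <;> simp [bigQ, sigmaCols, blockDiagonal'_apply_mk]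

theorem bigA_mulVec :
    bigA A M *ᵥ Sum.elim (Sigma.uncurry v) Pe =
      Sum.elim (Sigma.uncurry fun k => A k *ᵥ v k) (∑ k, M k *ᵥ v k) := by
  simp [bigA_eq_fromBlocks, fromBlocks_mulVec, blockDiagonal'_mulVec_uncurry,
    sigmaCols_mulVec_uncurry]

theorem bigB_mulVec :
    bigB B *ᵥ Sum.elim (Sigma.uncurry v) Pe = Sigma.uncurry fun k => B k *ᵥ v k := by
  simp [bigB_eq_fromCols, blockDiagonal'_mulVec_uncurry]

theorem bigQ_mulVec :
    bigQ lam Qk M *ᵥ Sum.elim (Sigma.uncurry v) Pe =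
      Sum.elim (Sigma.uncurry fun k => lam k • Qk k *ᵥ v k + (M k)ᵀ *ᵥ Pe)
        (∑ k, M k *ᵥ v k) := by
  simp only [bigQ_eq_fromBlocks, fromBlocks_mulVec, Sum.elim_comp_inl,
    blockDiagonal'_mulVec_uncurry, smul_mulVec, Sum.elim_comp_inr, sigmaCols_transpose_mulVec,
    sigmaCols_mulVec_uncurry, zero_mulVec, add_zero]
  rfl

theorem bigB_transpose_mulVec (η : ∀ k, Fin (s k) → ℝ) :
    (bigB B (N := N))ᵀ *ᵥ Sigma.uncurry η =
      Sum.elim (Sigma.uncurry fun k => (B k)ᵀ *ᵥ η k) 0 := by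
  rw [bigB_eq_fromCols, transpose_fromCols, blockDiagonal'_transpose, transpose_zero,
    fromRows_mulVec, blockDiagonal'_mulVec_uncurry, zero_mulVec]

theorem bigA_transpose_mulVec (μ : ∀ k, Fin (q k) → ℝ) (μM : Fin N → ℝ) :
    (bigA A M)ᵀ *ᵥ Sum.elim (Sigma.uncurry μ) μM =
      Sum.elim (Sigma.uncurry fun k => (A k)ᵀ *ᵥ μ k + (M k)ᵀ *ᵥ μM) 0 := by
  simp only [bigA_eq_fromBlocks, fromBlocks_transpose, blockDiagonal'_transpose, transpose_zero,
    fromBlocks_mulVec, Sum.elim_comp_inl, blockDiagonal'_mulVec_uncurry, Sum.elim_comp_inr,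
    sigmaCols_transpose_mulVec, zero_mulVec, add_zero]
  rfl

theorem aggregated_stationarity_iff (pi0 : ∀ k, Fin (n k) → ℝ) (η : ∀ k, Fin (s k) → ℝ)
    (μ : ∀ k, Fin (q k) → ℝ) :
    -Sum.elim (Sigma.uncurry pi0) 0 - bigQ lam Qk M *ᵥ Sum.elim (Sigma.uncurry v) Pe
        - (bigB B)ᵀ *ᵥ Sigma.uncurry η - (bigA A M)ᵀ *ᵥ Sum.elim (Sigma.uncurry μ) 0 = 0 ↔
      (∀ k, -(pi0 k + (M k)ᵀ *ᵥ Pe) - lam k • Qk k *ᵥ v k - (B k)ᵀ *ᵥ η k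
          - (A k)ᵀ *ᵥ μ k = 0) ∧
        ∑ k, M k *ᵥ v k = 0 := by
  have hresidual : -Sum.elim (Sigma.uncurry pi0) 0
      - bigQ lam Qk M *ᵥ Sum.elim (Sigma.uncurry v) Pe - (bigB B)ᵀ *ᵥ Sigma.uncurry η
      - (bigA A M)ᵀ *ᵥ Sum.elim (Sigma.uncurry μ) 0 =
      Sum.elim (Sigma.uncurry fun k => -(pi0 k + (M k)ᵀ *ᵥ Pe) - lam k • Qk k *ᵥ v k
          - (B k)ᵀ *ᵥ η k - (A k)ᵀ *ᵥ μ k)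
        (-∑ k, M k *ᵥ v k) := by
    rw [bigQ_mulVec, bigB_transpose_mulVec, bigA_transpose_mulVec]
    funext i
    rcases i with ⟨k, i⟩ | r
    · simp only [mulVec_zero, add_zero, Pi.sub_apply, Pi.neg_apply, Sum.elim_inl, Sigma.uncurry,
        Pi.add_apply, Pi.smul_apply, smul_eq_mul]
      ring
    · simp
  rw [hresidual, ← Sum.elim_zero_zero, Sum.elim_eq_iff, neg_eq_zero, Sigma.uncurry_eq_zero_iff,
    funext_iff]
  rfl

theorem aggregated_feasibility_iff (a : ∀ k, Fin (q k) → ℝ) :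
    bigA A M *ᵥ Sum.elim (Sigma.uncurry v) Pe = Sum.elim (Sigma.uncurry a) 0 ↔
      (∀ k, A k *ᵥ v k = a k) ∧ ∑ k, M k *ᵥ v k = 0 := by
  rw [bigA_mulVec, Sum.elim_eq_iff, Sigma.uncurry_injective.eq_iff, funext_iff]

end Aggregation

theorem stmt13_general {m N : ℕ} {n q s : Fin m → ℕ}
    (A : ∀ k, Matrix (Fin (q k)) (Fin (n k)) ℝ) (a : ∀ k, Fin (q k) → ℝ)
    (B : ∀ k, Matrix (Fin (s k)) (Fin (n k)) ℝ) (b : ∀ k, Fin (s k) → ℝ)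
    (M : ∀ k, Matrix (Fin N) (Fin (n k)) ℝ)
    (pi0 : ∀ k, Fin (n k) → ℝ)
    (lam : Fin m → ℝ)
    (Qk : ∀ k, Matrix (Fin (n k)) (Fin (n k)) ℝ)
    (v : ∀ k, Fin (n k) → ℝ) (Pe : Fin N → ℝ)
    (η : ∀ k, Fin (s k) → ℝ) (μk : ∀ k, Fin (q k) → ℝ) (μM : Fin N → ℝ)
    -- the concatenated primal, dual and data vectors
    (x : ((Σ k : Fin m, Fin (n k)) ⊕ Fin N) → ℝ)
    (hx : x = Sum.elim (fun pr => v pr.1 pr.2) Pe)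
    (ηv : (Σ k : Fin m, Fin (s k)) → ℝ)
    (hηv : ηv = fun pr => η pr.1 pr.2)
    (μv : ((Σ k : Fin m, Fin (q k)) ⊕ Fin N) → ℝ)
    (hμv : μv = Sum.elim (fun pr => μk pr.1 pr.2) μM)
    (bigpi : ((Σ k : Fin m, Fin (n k)) ⊕ Fin N) → ℝ)
    (hbigpi : bigpi = Sum.elim (fun pr => pi0 pr.1 pr.2) 0)
    (biga : ((Σ k : Fin m, Fin (q k)) ⊕ Fin N) → ℝ)
    (hbiga : biga = Sum.elim (fun pr => a pr.1 pr.2) 0)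
    (bigb : (Σ k : Fin m, Fin (s k)) → ℝ)
    (hbigb : bigb = fun pr => b pr.1 pr.2) :
    -- individual KKT systems + market clearing + μ_M = 0
    ((∀ k : Fin m,
        -(pi0 k + (M k)ᵀ.mulVec Pe) - lam k • (Qk k).mulVec (v k)
            - (B k)ᵀ.mulVec (η k) - (A k)ᵀ.mulVec (μk k) = 0 ∧
        η k ⬝ᵥ ((B k).mulVec (v k) - b k) = 0 ∧
        (B k).mulVec (v k) ≤ b k ∧
        (A k).mulVec (v k) = a k ∧
        0 ≤ η k) ∧
      (∑ k, (M k).mulVec (v k)) = 0 ∧ μM = 0) ↔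
    -- aggregated KKT system
    (-bigpi - (bigQ lam Qk M).mulVec x - (bigB B)ᵀ.mulVec ηv
        - (bigA A M)ᵀ.mulVec μv = 0 ∧
      ηv ⬝ᵥ ((bigB B).mulVec x - bigb) = 0 ∧
      (bigB B).mulVec x ≤ bigb ∧
      (bigA A M).mulVec x = biga ∧
      0 ≤ ηv ∧ μM = 0) := by
  obtain rfl : x = Sum.elim (Sigma.uncurry v) Pe := hx
  obtain rfl : ηv = Sigma.uncurry η := hηv
  obtain rfl : μv = Sum.elim (Sigma.uncurry μk) μM := hμv
  obtain rfl : bigpi = Sum.elim (Sigma.uncurry pi0) 0 := hbigpi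
  obtain rfl : biga = Sum.elim (Sigma.uncurry a) 0 := hbiga
  obtain rfl : bigb = Sigma.uncurry b := hbigb
  obtain rfl | hμM := eq_or_ne μM 0
  case inr => simp [hμM]
  rw [aggregated_stationarity_iff, aggregated_feasibility_iff, bigB_mulVec,
    Sigma.uncurry_le_uncurry_iff, Sigma.uncurry_nonneg_iff]
  simp only [forall_and]
  constructor
  · rintro ⟨⟨hstat, hslack, hineq, heq, hη⟩, hclear, -⟩
    exact ⟨⟨hstat, hclear⟩,
      (Sigma.uncurry_dotProduct_eq_zero_iff hη fun k => sub_nonpos.2 (hineq k)).2 hslack,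
      hineq, ⟨heq, hclear⟩, hη, trivial⟩
  · rintro ⟨⟨hstat, hclear⟩, hcompl, hineq, ⟨heq, -⟩, hη, -⟩
    exact ⟨⟨hstat,
      (Sigma.uncurry_dotProduct_eq_zero_iff hη fun k => sub_nonpos.2 (hineq k)).1 hcompl,
      hineq, heq, hη⟩, hclear, trivial⟩

/-- Equivalence of the individual KKT systems (plus market clearing and
`μ_M = 0`) with the aggregated KKT system (Proposition 4.2 of the paper). -/
theorem stmt13 {m N : ℕ} {n q s : Fin m → ℕ}
    (A : ∀ k, Matrix (Fin (q k)) (Fin (n k)) ℝ) (a : ∀ k, Fin (q k) → ℝ)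
    (B : ∀ k, Matrix (Fin (s k)) (Fin (n k)) ℝ) (b : ∀ k, Fin (s k) → ℝ)
    (M : ∀ k, Matrix (Fin N) (Fin (n k)) ℝ)
    (pi0 : ∀ k, Fin (n k) → ℝ)
    (lam : Fin m → ℝ) (hlam : ∀ k, 0 < lam k)
    (Qk : ∀ k, Matrix (Fin (n k)) (Fin (n k)) ℝ) (hQk : ∀ k, (Qk k).PosSemidef)
    (v : ∀ k, Fin (n k) → ℝ) (Pe : Fin N → ℝ)
    (η : ∀ k, Fin (s k) → ℝ) (μk : ∀ k, Fin (q k) → ℝ) (μM : Fin N → ℝ)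
    -- the concatenated primal, dual and data vectors
    (x : ((Σ k : Fin m, Fin (n k)) ⊕ Fin N) → ℝ)
    (hx : x = Sum.elim (fun pr => v pr.1 pr.2) Pe)
    (ηv : (Σ k : Fin m, Fin (s k)) → ℝ)
    (hηv : ηv = fun pr => η pr.1 pr.2)
    (μv : ((Σ k : Fin m, Fin (q k)) ⊕ Fin N) → ℝ)
    (hμv : μv = Sum.elim (fun pr => μk pr.1 pr.2) μM)
    (bigpi : ((Σ k : Fin m, Fin (n k)) ⊕ Fin N) → ℝ)
    (hbigpi : bigpi = Sum.elim (fun pr => pi0 pr.1 pr.2) 0)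
    (biga : ((Σ k : Fin m, Fin (q k)) ⊕ Fin N) → ℝ)
    (hbiga : biga = Sum.elim (fun pr => a pr.1 pr.2) 0)
    (bigb : (Σ k : Fin m, Fin (s k)) → ℝ)
    (hbigb : bigb = fun pr => b pr.1 pr.2) :
    -- individual KKT systems + market clearing + μ_M = 0
    ((∀ k : Fin m,
        -(pi0 k + (M k)ᵀ.mulVec Pe) - lam k • (Qk k).mulVec (v k)
            - (B k)ᵀ.mulVec (η k) - (A k)ᵀ.mulVec (μk k) = 0 ∧
        η k ⬝ᵥ ((B k).mulVec (v k) - b k) = 0 ∧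
        (B k).mulVec (v k) ≤ b k ∧
        (A k).mulVec (v k) = a k ∧
        0 ≤ η k) ∧
      (∑ k, (M k).mulVec (v k)) = 0 ∧ μM = 0) ↔
    -- aggregated KKT system
    (-bigpi - (bigQ lam Qk M).mulVec x - (bigB B)ᵀ.mulVec ηv
        - (bigA A M)ᵀ.mulVec μv = 0 ∧
      ηv ⬝ᵥ ((bigB B).mulVec x - bigb) = 0 ∧
      (bigB B).mulVec x ≤ bigb ∧
      (bigA A M).mulVec x = biga ∧
      0 ≤ ηv ∧ μM = 0) :=
  stmt13_general A a B b M pi0 lam Qk v Pe η μk μM x hx ηv hηv μv hμv bigpi hbigpi biga hbiga bigb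
    hbigb
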